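/- Fix an integer k ≥ 1. Let G = (V, E, W) be a finite weighted graph, let e₀ = (u, v) ∉ E with weight w₀ ≥ 0, and let G̃ = (V, E ∪ {e₀}, W̃) with W̃ = W on E and W̃(e₀) = w₀. If u and v lie in the same connected component of the sublevel graph G*_{w₀}, then the k-cluster filtration values are unchanged: τ̃_k(x) = τ_k(x) for every vertex x ∈ V, where τ̃_k is computed in G̃ and τ_k in G. -/

import Mathlib

/-! Every edge of the enlarged sublevel graph `G̃*_t` joins vertices already connected in `G*_t`:
old edges keep their weight, and the new edge is present only for `t ≥ w₀`, when `u` and `v`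
are connected in `G*_{w₀} ≤ G*_t`. So `G̃*_t` and `G*_t` have the same components for every `t`,
hence the same cluster sizes `N_t` and the same filtration values. -/

open ENNReal

variable {V : Type*}

/-- The sublevel graph `G*_t`: edges of `G` with weight at most `t`. -/
def sublevel (G : SimpleGraph V) (W : Sym2 V → NNReal) (t : ℝ≥0∞) : SimpleGraph V where
  Adj u v := G.Adj u v ∧ (W s(u, v) : ℝ≥0∞) ≤ t
  symm := by
    constructor
    intro u v h
    exact ⟨h.1.symm, by rw [Sym2.eq_swap]; exact h.2⟩
  loopless := ⟨fun v h => G.irrefl h.1⟩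

/-- `N_t(v)`: the number of vertices in the connected component of `v` in `G*_t`. -/
noncomputable def clusterSize (G : SimpleGraph V) (W : Sym2 V → NNReal) (t : ℝ≥0∞) (v : V) : ℕ :=
  Set.ncard {u | (sublevel G W t).Reachable v u}

/-- `τ_k(v) = inf {t : N_t(v) ≥ k}`, the `k`-cluster filtration value of a vertex. -/
noncomputable def tauV (G : SimpleGraph V) (W : Sym2 V → NNReal) (k : ℕ) (v : V) : ℝ≥0∞ :=
  sInf {t : ℝ≥0∞ | k ≤ clusterSize G W t v}

theorem SimpleGraph.Reachable.of_forall_adj_reachable {H K : SimpleGraph V}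
    (hK : ∀ a b, K.Adj a b → H.Reachable a b) {a b : V} (h : K.Reachable a b) :
    H.Reachable a b := by
  rw [SimpleGraph.reachable_iff_reflTransGen] at h ⊢
  exact Relation.reflTransGen_closed
    (fun a b hab => (H.reachable_iff_reflTransGen a b).mp (hK a b hab)) a b h

section sublevel

variable {G : SimpleGraph V} {W : Sym2 V → NNReal}

theorem sublevel_mono : Monotone (sublevel G W) :=
  fun _ _ hst _ _ hab => ⟨hab.1, hab.2.trans hst⟩

variable [DecidableEq V] {u v : V} {w₀ : NNReal}

theorem update_weight_of_adj (hnotE : ¬ G.Adj u v) {a b : V} (hab : G.Adj a b) :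
    Function.update W s(u, v) w₀ s(a, b) = W s(a, b) := by
  refine Function.update_of_ne (fun h => ?_) _ _
  rcases Sym2.eq_iff.mp h with ⟨rfl, rfl⟩ | ⟨rfl, rfl⟩
  exacts [hnotE hab, hnotE hab.symm]

theorem sublevel_le_sublevel_sup_edge (hnotE : ¬ G.Adj u v) (t : ℝ≥0∞) :
    sublevel G W t ≤
      sublevel (G ⊔ SimpleGraph.fromEdgeSet {s(u, v)}) (Function.update W s(u, v) w₀) t :=
  fun _ _ hab => ⟨Or.inl hab.1, by rw [update_weight_of_adj hnotE hab.1]; exact hab.2⟩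

theorem reachable_of_sublevel_sup_edge_adj (hnotE : ¬ G.Adj u v)
    (hreach : (sublevel G W w₀).Reachable u v) {t : ℝ≥0∞} {a b : V}
    (hab : (sublevel (G ⊔ SimpleGraph.fromEdgeSet {s(u, v)})
      (Function.update W s(u, v) w₀) t).Adj a b) :
    (sublevel G W t).Reachable a b := by
  obtain ⟨hold | hnew, hle⟩ := hab
  · exact SimpleGraph.Adj.reachable ⟨hold, by rwa [update_weight_of_adj hnotE hold] at hle⟩
  · have hedge : s(a, b) = s(u, v) := (SimpleGraph.fromEdgeSet_adj _).mp hnew |>.1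
    rw [hedge, Function.update_self] at hle
    have huv : (sublevel G W t).Reachable u v := hreach.mono (sublevel_mono hle)
    rcases Sym2.eq_iff.mp hedge with ⟨rfl, rfl⟩ | ⟨rfl, rfl⟩
    exacts [huv, huv.symm]

theorem reachable_sublevel_sup_edge_iff (hnotE : ¬ G.Adj u v)
    (hreach : (sublevel G W w₀).Reachable u v) (t : ℝ≥0∞) (a b : V) :
    (sublevel (G ⊔ SimpleGraph.fromEdgeSet {s(u, v)})
      (Function.update W s(u, v) w₀) t).Reachable a b ↔ (sublevel G W t).Reachable a b :=
  ⟨.of_forall_adj_reachable fun _ _ => reachable_of_sublevel_sup_edge_adj hnotE hreach,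
    .mono (sublevel_le_sublevel_sup_edge hnotE t)⟩

end sublevel

theorem tauV_add_edge_same_component_general [DecidableEq V]
    (G : SimpleGraph V) (W : Sym2 V → NNReal) (k : ℕ)
    (u v : V) (hnotE : ¬ G.Adj u v) (w₀ : NNReal)
    (hreach : (sublevel G W (w₀ : ℝ≥0∞)).Reachable u v) :
    ∀ x : V,
      tauV (G ⊔ SimpleGraph.fromEdgeSet {s(u, v)}) (Function.update W s(u, v) w₀) k x =
        tauV G W k x := by
  intro x
  have hcluster : ∀ t, clusterSize (G ⊔ SimpleGraph.fromEdgeSet {s(u, v)})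
      (Function.update W s(u, v) w₀) t x = clusterSize G W t x := fun t =>
    congrArg Set.ncard (Set.ext fun y => reachable_sublevel_sup_edge_iff hnotE hreach t x y)
  simp only [tauV, hcluster]

/-- For `k ≥ 1`: if the added edge `e₀ = (u,v) ∉ E` with weight `w₀`
joins two vertices already in the same connected component of the sublevel graph
`G*_{w₀}`, then all `k`-cluster filtration values are unchanged: `τ̃_k(x) = τ_k(x)`
for every vertex `x`. -/
theorem tauV_add_edge_same_component [Fintype V] [DecidableEq V]
    (G : SimpleGraph V) (W : Sym2 V → NNReal) (k : ℕ) (hk : 1 ≤ k)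
    (u v : V) (huv : u ≠ v) (hnotE : ¬ G.Adj u v) (w₀ : NNReal)
    (hreach : (sublevel G W (w₀ : ℝ≥0∞)).Reachable u v) :
    ∀ x : V,
      tauV (G ⊔ SimpleGraph.fromEdgeSet {s(u, v)}) (Function.update W s(u, v) w₀) k x =
        tauV G W k x :=
  tauV_add_edge_same_component_general G W k u v hnotE w₀ hreach
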